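/- Let p be an odd prime, q = p^r, and d ≥ 3 odd with p ∤ d(d−1). For every integer m with 0 ≤ m ≤ q−2, m ≠ (q−1)/2, and every i with 0 ≤ i ≤ r−1, one has ⌊−2mp^i/(q−1)⌋ + ⌊2mdp^i/(q−1)⌋ + ⌊−2m(d−1)p^i/(q−1)⌋ − ⌊−mp^i/(q−1)⌋ − ⌊mdp^i/(q−1)⌋ − ⌊−m(d−1)p^i/(q−1)⌋ = Σ_{h odd, 1 ≤ h ≤ 2d−3} ⌊⟨hp^i/(2(d−1))⟩ − mp^i/(q−1)⌋ + Σ_{h odd, 1 ≤ h ≤ 2d−1, h ≠ d} ⌊⟨−hp^i/(2d)⟩ + mp^i/(q−1)⌋. -/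

import Mathlib

/-!
Write `X = m p^i / (q - 1)`. Multiplication by `p^i` permutes the odd residues modulo `2(d - 1)`,
and `h ↦ -h p^i` permutes the odd residues modulo `2d` other than `d`; so each sum on the right is a
sum of `⌊x + h / (2n)⌋` over odd `h`, which Hermite's identity evaluates to `⌊n x + 1/2⌋`.
On the left, `⌊2x⌋ - ⌊x⌋ = ⌊x + 1/2⌋` turns the six floors into three such half-shifted floors, and
what remains is `⌊-X + 1/2⌋ = -⌊X + 1/2⌋`. This holds because `X + 1/2` is not an integer:
as `p ∤ q - 1`, that would force `(q - 1) ∣ 2m`, i.e. `m = 0` or `m = (q - 1)/2`.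
-/

open Finset

theorem Int.sum_range_add_ediv {n : ℕ} (hn : 0 < n) (N : ℤ) :
    ∑ k ∈ Finset.range n, (N + k) / n = N := by
  have hn' : (n : ℤ) ≠ 0 := by exact_mod_cast hn.ne'
  set S : ℤ → ℤ := fun N => ∑ k ∈ Finset.range n, (N + k) / n with hS
  have step : ∀ N, S (N + 1) = S N + 1 := by
    intro N
    have h := (sum_range_succ' (fun k : ℕ => (N + k) / n) n).symm.trans
      (sum_range_succ (fun k : ℕ => (N + k) / n) n)
    have hNn : (N + n) / n = N / n + 1 := by simpa using Int.add_mul_ediv_right N 1 hn'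
    simp only [Nat.cast_add, Nat.cast_one, Nat.cast_zero, add_zero, hNn] at h
    simp only [hS, add_right_comm N 1, add_assoc N]
    linarith
  show S N = N
  induction N using Int.induction_on with
  | zero =>
    refine sum_eq_zero fun k hk => ?_
    exact Int.ediv_eq_zero_of_lt (by omega) (by simpa using mem_range.mp hk)
  | succ i ih => rw [step, ih]
  | pred i ih =>
    have h := step (-i - 1)
    rw [sub_add_cancel, ih] at h
    linarith

theorem filter_odd_Icc_eq_image (n : ℕ) :
    (Icc 1 (2 * n - 1)).filter Odd = (range n).image (fun j => 2 * j + 1) := by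
  ext h
  simp only [mem_filter, mem_Icc, mem_image, mem_range, Nat.odd_iff]
  constructor
  · rintro ⟨⟨h1, h2⟩, h3⟩; exact ⟨h / 2, by omega, by omega⟩
  · rintro ⟨j, hj, rfl⟩; omega

theorem sum_filter_odd_mul_mod {M : Type*} [AddCommMonoid M] {n w : ℕ}
    (hw : w.Coprime (2 * n)) (g : ℕ → M) :
    ∑ h ∈ (Icc 1 (2 * n - 1)).filter Odd, g (h * w % (2 * n)) =
      ∑ h ∈ (Icc 1 (2 * n - 1)).filter Odd, g h := by
  have hw_odd : Odd w := (hw.coprime_dvd_right (dvd_mul_right 2 n)).odd_of_right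
  have maps : ∀ h ∈ (Icc 1 (2 * n - 1)).filter Odd,
      h * w % (2 * n) ∈ (Icc 1 (2 * n - 1)).filter Odd := by
    intro h hh
    simp only [mem_filter, mem_Icc] at hh ⊢
    have h_odd : Odd (h * w % (2 * n)) := by
      rw [Nat.odd_iff, Nat.mod_mod_of_dvd _ (dvd_mul_right 2 n), ← Nat.odd_iff]
      exact hh.2.mul hw_odd
    have := Nat.mod_lt (h * w) (show 0 < 2 * n by omega)
    exact ⟨⟨h_odd.pos, by omega⟩, h_odd⟩
  have inj : Set.InjOn (· * w % (2 * n)) ((Icc 1 (2 * n - 1)).filter Odd) := by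
    intro a ha b hb hab
    simp only [coe_filter, mem_Icc, Set.mem_ofPred_eq] at ha hb
    exact (Nat.ModEq.cancel_right_of_coprime hw.symm hab).eq_of_lt_of_lt (by omega) (by omega)
  exact sum_nbij _ maps inj (surjOn_of_injOn_of_card_le _ maps inj le_rfl) fun _ _ => rfl

section Floor

variable {K : Type*} [Field K] [LinearOrder K] [IsOrderedRing K] [FloorRing K]

theorem Int.sum_range_floor_add_div {n : ℕ} (hn : 0 < n) (x : K) :
    ∑ k ∈ Finset.range n, ⌊x + k / n⌋ = ⌊n * x⌋ := by
  have hn' : (n : K) ≠ 0 := by exact_mod_cast hn.ne'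
  calc ∑ k ∈ Finset.range n, ⌊x + k / n⌋ = ∑ k ∈ Finset.range n, (⌊n * x⌋ + k) / n := by
        refine sum_congr rfl fun k _ => ?_
        rw [← Int.floor_add_natCast, ← Int.floor_div_natCast, add_div, mul_div_cancel_left₀ _ hn']
    _ = ⌊n * x⌋ := Int.sum_range_add_ediv hn _

theorem Int.floor_add_floor_add_half (x : K) : ⌊x⌋ + ⌊x + 1 / 2⌋ = ⌊2 * x⌋ := by
  have h := Int.sum_range_floor_add_div (n := 1 + 1) (by norm_num) x
  rw [Finset.sum_range_succ, Finset.sum_range_one] at h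
  simpa using h

theorem Int.floor_neg_add_half {x : K} (hx : x + 1 / 2 ∉ Set.range Int.cast) :
    ⌊-x + 1 / 2⌋ = -⌊x + 1 / 2⌋ := by
  have h := (Int.ceil_eq_floor_add_one_iff_notMem _).mpr hx
  rw [show -x + 1 / 2 = -(x + 1 / 2) + 1 by ring, Int.floor_add_one, Int.floor_neg, h]
  ring

theorem sum_filter_odd_floor_add_div (n : ℕ) (y : K) :
    ∑ h ∈ (Icc 1 (2 * n - 1)).filter Odd, ⌊h / (2 * n : K) + y⌋ = ⌊n * y + 1 / 2⌋ := by
  rcases n.eq_zero_or_pos with rfl | hn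
  · rw [Nat.cast_zero, zero_mul, zero_add, Int.floor_eq_zero_iff.2 (by norm_num)]
    simp
  have hn' : (n : K) ≠ 0 := by exact_mod_cast hn.ne'
  rw [filter_odd_Icc_eq_image, sum_image fun a _ b _ hab => by simpa using hab]
  calc ∑ j ∈ range n, ⌊((2 * j + 1 : ℕ) : K) / (2 * n) + y⌋
      = ∑ j ∈ range n, ⌊(y + 1 / (2 * n)) + j / n⌋ := by
        refine sum_congr rfl fun j _ => congrArg _ ?_
        field_simp
        push_cast
        ring
    _ = ⌊n * y + 1 / 2⌋ := by
        rw [Int.sum_range_floor_add_div hn]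
        congr 1
        field_simp

theorem Int.fract_neg_div_natCast (a n : ℕ) :
    Int.fract (-(a : K) / n) = Int.fract (((a * (n - 1) : ℕ) : K) / n) := by
  rcases n.eq_zero_or_pos with rfl | hn
  · simp
  have hn' : (n : K) ≠ 0 := by exact_mod_cast hn.ne'
  rw [← Int.fract_sub_natCast (((a * (n - 1) : ℕ) : K) / n) a]
  congr 1
  push_cast [Nat.cast_sub (show 1 ≤ n from hn)]
  field_simp
  ring

theorem sum_filter_odd_floor_fract_mul_div_sub {n w : ℕ} (hw : w.Coprime (2 * n)) (y : K) :
    ∑ h ∈ (Icc 1 (2 * n - 1)).filter Odd, ⌊Int.fract ((h : K) * w / (2 * n)) - y⌋ =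
      ⌊n * -y + 1 / 2⌋ := by
  calc ∑ h ∈ (Icc 1 (2 * n - 1)).filter Odd, ⌊Int.fract ((h : K) * w / (2 * n)) - y⌋
      = ∑ h ∈ (Icc 1 (2 * n - 1)).filter Odd, ⌊((h * w % (2 * n) : ℕ) : K) / (2 * n) + -y⌋ := by
        refine sum_congr rfl fun h _ => ?_
        rw [← Nat.cast_ofNat, ← Nat.cast_mul, ← Nat.cast_mul,
          ← Int.fract_div_natCast_eq_div_natCast_mod, Nat.cast_mul, Nat.cast_mul, sub_eq_add_neg]
    _ = ∑ h ∈ (Icc 1 (2 * n - 1)).filter Odd, ⌊(h : K) / (2 * n) + -y⌋ :=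
        sum_filter_odd_mul_mod hw fun h => ⌊(h : K) / (2 * n) + -y⌋
    _ = ⌊n * -y + 1 / 2⌋ := sum_filter_odd_floor_add_div n (-y)

theorem sum_filter_odd_ne_floor_fract_neg_mul_div_add {n w : ℕ} (hn : Odd n)
    (hw : w.Coprime (2 * n)) (y : K) :
    ∑ h ∈ (Icc 1 (2 * n - 1)).filter (fun h => Odd h ∧ h ≠ n),
        ⌊Int.fract (-(h : K) * w / (2 * n)) + y⌋ =
      ⌊n * y + 1 / 2⌋ - ⌊y + 1 / 2⌋ := by
  have hw' : (w * (2 * n - 1)).Coprime (2 * n) :=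
    hw.mul_left ((Nat.coprime_self_sub_left (by have := hn.pos; omega)).2 (Nat.coprime_one_left _))
  have hn_mem : n ∈ (Icc 1 (2 * n - 1)).filter Odd := by
    simp only [mem_filter, mem_Icc]
    exact ⟨⟨hn.pos, by omega⟩, hn⟩
  have h_fract : ∀ h : ℕ, Int.fract (-(h : K) * w / (2 * n)) =
      Int.fract ((h : K) * ↑(w * (2 * n - 1)) / (2 * n)) := by
    intro h
    have := Int.fract_neg_div_natCast (K := K) (h * w) (2 * n)
    push_cast at this ⊢
    rwa [neg_mul, ← mul_assoc]
  obtain ⟨k, hk⟩ := (hw'.coprime_dvd_right (dvd_mul_right 2 n)).odd_of_right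
  -- the middle residue `n` is fixed by every odd multiplier
  have h_half : Int.fract ((n : K) * ↑(w * (2 * n - 1)) / (2 * n)) = 1 / 2 := by
    have hn' : (n : K) ≠ 0 := by exact_mod_cast hn.pos.ne'
    rw [hk, show (n : K) * ↑(2 * k + 1) / (2 * n) = k + 1 / 2 by push_cast; field_simp,
      Int.fract_natCast_add, Int.fract_eq_self]
    norm_num
  rw [filter_and, filter_ne', inter_erase, inter_eq_left.2 (filter_subset _ _)]
  simp_rw [h_fract, ← sub_neg_eq_add _ y]
  rw [sum_erase_eq_sub hn_mem, sum_filter_odd_floor_fract_mul_div_sub hw', h_half, neg_neg,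
    sub_neg_eq_add, add_comm (1 / 2 : K) y]

theorem natCast_mul_div_add_half_notMem_range_intCast {N u m : ℕ} (hu : u.Coprime N)
    (hm : m < N) (h2m : 2 * m ≠ N) : (m * u / N + 1 / 2 : K) ∉ Set.range Int.cast := by
  rintro ⟨k, hk⟩
  have hN : (N : K) ≠ 0 := by exact_mod_cast (show N ≠ 0 by omega)
  have hkZ : 2 * (m * u : ℤ) + N = 2 * k * N := by
    have : (2 * (m * u) + N : K) = 2 * k * N := by rw [hk]; field_simp
    exact_mod_cast this
  have hdvd : N ∣ 2 * m * u := by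
    rw [← Int.natCast_dvd_natCast]
    exact ⟨2 * k - 1, by push_cast; linarith⟩
  obtain ⟨c, hc⟩ := hu.symm.dvd_of_dvd_mul_right hdvd
  obtain rfl | rfl : c = 0 ∨ c = 1 := by
    have : c < 2 := by nlinarith
    omega
  · have hm0 : m = 0 := by omega
    subst hm0
    simp only [Nat.cast_zero, zero_mul, mul_zero, zero_add] at hkZ
    have : (N : ℤ) * (2 * k - 1) = 0 := by linarith
    rcases mul_eq_zero.mp this with h | h <;> omega
  · omega

theorem floor_two_mul_sub_floor_combination {t s Q d : K}
    (hX : t * s / Q + 1 / 2 ∉ Set.range Int.cast) :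
    ⌊-2 * t * s / Q⌋ + ⌊2 * t * d * s / Q⌋ + ⌊-2 * t * (d - 1) * s / Q⌋ -
        ⌊-t * s / Q⌋ - ⌊t * d * s / Q⌋ - ⌊-t * (d - 1) * s / Q⌋ =
      ⌊(d - 1) * -(t * s / Q) + 1 / 2⌋ + (⌊d * (t * s / Q) + 1 / 2⌋ - ⌊t * s / Q + 1 / 2⌋) := by
  set X := t * s / Q with hX_def
  rw [show -2 * t * s / Q = 2 * -X by rw [hX_def]; ring,
    show 2 * t * d * s / Q = 2 * (d * X) by rw [hX_def]; ring,
    show -2 * t * (d - 1) * s / Q = 2 * ((d - 1) * -X) by rw [hX_def]; ring,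
    show -t * s / Q = -X by rw [hX_def]; ring,
    show t * d * s / Q = d * X by rw [hX_def]; ring,
    show -t * (d - 1) * s / Q = (d - 1) * -X by rw [hX_def]; ring,
    ← Int.floor_add_floor_add_half (-X), ← Int.floor_add_floor_add_half (d * X),
    ← Int.floor_add_floor_add_half ((d - 1) * -X), Int.floor_neg_add_half hX]
  ring

end Floor

theorem stmt10_general (p r d q : ℕ) (hp : p.Prime) (hodd : Odd p) (hr : 0 < r)
    (hq : q = p ^ r) (hdo : Odd d) (hpd : ¬ p ∣ d * (d - 1))
    (m : ℕ) (hm2 : m ≤ q - 2) (hm3 : m ≠ (q - 1) / 2)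
    (i : ℕ) :
    ⌊(-2 * (m : ℚ) * (p : ℚ) ^ i) / ((q : ℚ) - 1)⌋ +
      ⌊(2 * (m : ℚ) * d * (p : ℚ) ^ i) / ((q : ℚ) - 1)⌋ +
      ⌊(-2 * (m : ℚ) * ((d : ℚ) - 1) * (p : ℚ) ^ i) / ((q : ℚ) - 1)⌋ -
      ⌊(-(m : ℚ) * (p : ℚ) ^ i) / ((q : ℚ) - 1)⌋ -
      ⌊((m : ℚ) * d * (p : ℚ) ^ i) / ((q : ℚ) - 1)⌋ -
      ⌊(-(m : ℚ) * ((d : ℚ) - 1) * (p : ℚ) ^ i) / ((q : ℚ) - 1)⌋ =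
    (∑ h ∈ (Finset.Icc 1 (2 * d - 3)).filter (fun h => Odd h),
        ⌊Int.fract (((h : ℚ) * (p : ℚ) ^ i) / (2 * ((d : ℚ) - 1))) -
          ((m : ℚ) * (p : ℚ) ^ i) / ((q : ℚ) - 1)⌋) +
      ∑ h ∈ (Finset.Icc 1 (2 * d - 1)).filter (fun h => Odd h ∧ h ≠ d),
        ⌊Int.fract ((-(h : ℚ) * (p : ℚ) ^ i) / (2 * (d : ℚ))) +
          ((m : ℚ) * (p : ℚ) ^ i) / ((q : ℚ) - 1)⌋ := by
  have hd_pos : 0 < d := hdo.pos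
  have hp_d : p.Coprime d := (hp.coprime_iff_not_dvd).2 fun h => hpd (h.mul_right _)
  have hp_d1 : p.Coprime (d - 1) := (hp.coprime_iff_not_dvd).2 fun h => hpd (h.mul_left _)
  have hp_2 : p.Coprime 2 := Nat.coprime_two_right.2 hodd
  have hq1_p : (q - 1).Coprime p :=
    ((Nat.coprime_self_sub_left (by omega)).2 (Nat.coprime_one_left q)).coprime_dvd_right
      (hq ▸ dvd_pow_self p hr.ne')
  have hX_half := natCast_mul_div_add_half_notMem_range_intCast (K := ℚ)
    (hq1_p.pow_right i).symm (show m < q - 1 by omega) (show 2 * m ≠ q - 1 by omega)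
  rw [Nat.cast_sub (show 1 ≤ q by omega), Nat.cast_one] at hX_half
  have hd_cast : (d : ℚ) - 1 = ((d - 1 : ℕ) : ℚ) := by rw [Nat.cast_sub hd_pos, Nat.cast_one]
  rw [← Nat.cast_pow, floor_two_mul_sub_floor_combination hX_half,
    show 2 * d - 3 = 2 * (d - 1) - 1 by omega, hd_cast,
    sum_filter_odd_floor_fract_mul_div_sub ((hp_2.mul_right hp_d1).pow_left i),
    sum_filter_odd_ne_floor_fract_neg_mul_div_add hdo ((hp_2.mul_right hp_d).pow_left i)]

/-- Floor-sum identity (doubled odd degree case): for `d ≥ 3` odd, `p ∤ d(d-1)`,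
`q = p^r`, `0 ≤ m ≤ q-2`, `m ≠ (q-1)/2` and `0 ≤ i ≤ r-1`. -/
theorem stmt10 (p r d q : ℕ) (hp : p.Prime) (hodd : Odd p) (hr : 0 < r)
    (hq : q = p ^ r) (hd : 3 ≤ d) (hdo : Odd d) (hpd : ¬ p ∣ d * (d - 1))
    (m : ℕ) (hm2 : m ≤ q - 2) (hm3 : m ≠ (q - 1) / 2)
    (i : ℕ) (hi : i ≤ r - 1) :
    ⌊(-2 * (m : ℚ) * (p : ℚ) ^ i) / ((q : ℚ) - 1)⌋ +
      ⌊(2 * (m : ℚ) * d * (p : ℚ) ^ i) / ((q : ℚ) - 1)⌋ +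
      ⌊(-2 * (m : ℚ) * ((d : ℚ) - 1) * (p : ℚ) ^ i) / ((q : ℚ) - 1)⌋ -
      ⌊(-(m : ℚ) * (p : ℚ) ^ i) / ((q : ℚ) - 1)⌋ -
      ⌊((m : ℚ) * d * (p : ℚ) ^ i) / ((q : ℚ) - 1)⌋ -
      ⌊(-(m : ℚ) * ((d : ℚ) - 1) * (p : ℚ) ^ i) / ((q : ℚ) - 1)⌋ =
    (∑ h ∈ (Finset.Icc 1 (2 * d - 3)).filter (fun h => Odd h),
        ⌊Int.fract (((h : ℚ) * (p : ℚ) ^ i) / (2 * ((d : ℚ) - 1))) -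
          ((m : ℚ) * (p : ℚ) ^ i) / ((q : ℚ) - 1)⌋) +
      ∑ h ∈ (Finset.Icc 1 (2 * d - 1)).filter (fun h => Odd h ∧ h ≠ d),
        ⌊Int.fract ((-(h : ℚ) * (p : ℚ) ^ i) / (2 * (d : ℚ))) +
          ((m : ℚ) * (p : ℚ) ^ i) / ((q : ℚ) - 1)⌋ :=
  stmt10_general p r d q hp hodd hr hq hdo hpd m hm2 hm3 i
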